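/- (Discrete tight frame property.) With the discrete setup below, for every function f : X → ℂ one has ∑_{(a,θ) ∈ P} ∑_{b ∈ B} |W_f(a,θ,b)|² (L_a/L_B)² = ∑_{x ∈ X} |f(x)|². -/

import Mathlib

/-!
Both identities are Parseval's identity for an orthogonal system: if the columns of a kernel
`e m i` are pairwise orthogonal with common squared norm `C` on the support of `a`, then
`∑ₘ |∑ᵢ e m i * a i|² = C ∑ᵢ |a i|²`. Each coordinate of `Ξ` is a complete residue system
mod `L`, so the DFT kernel is orthogonal over `Ξ`, giving `∑_ξ |f̂ ξ|² = ∑ₓ |f x|²`. Sampling on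
`B` makes the columns `ξ`, `ξ'` orthogonal unless `ξ ≡ ξ' mod L_B`, which the support condition on
`g_{a,θ}` rules out, so `∑_b |W_f(a,θ,b)|² = (L_B/L_a)² ∑_ξ g_{a,θ}(ξ)² |f̂ ξ|²`. Summing over
`(a,θ)` and using `∑ g_{a,θ}² = 1` gives the claim.
-/

noncomputable section
open scoped Real
open Finset

/-- The discrete Fourier grid `Ξ = {(ξ₁,ξ₂) ∈ ℤ² : -L/2 ≤ ξᵢ < L/2}` (the conditions are
encoded as `-L ≤ 2ξᵢ < L`). -/
def Xi (L : ℕ) : Finset (ℤ × ℤ) :=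
  ((Finset.Ico (-(L : ℤ)) (L : ℤ)) ×ˢ (Finset.Ico (-(L : ℤ)) (L : ℤ))).filter
    (fun ξ => -(L : ℤ) ≤ 2 * ξ.1 ∧ 2 * ξ.1 < (L : ℤ) ∧ -(L : ℤ) ≤ 2 * ξ.2 ∧ 2 * ξ.2 < (L : ℤ))

/-- The discrete Fourier transform `f̂(ξ) = (1/L) ∑_{x ∈ X} e^{-2πi x·ξ} f(x)`, where the spatial
grid point indexed by `n ∈ (Fin L)²` is `x = (n₁/L, n₂/L)`. -/
def dft (L : ℕ) (f : Fin L × Fin L → ℂ) (ξ : ℤ × ℤ) : ℂ :=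
  (L : ℂ)⁻¹ * ∑ n : Fin L × Fin L,
    Complex.exp (-(2 * ↑π * Complex.I) *
        ((((n.1 : ℕ) : ℂ) * (ξ.1 : ℂ) + ((n.2 : ℕ) : ℂ) * (ξ.2 : ℂ)) / (L : ℂ))) * f n

/-- `L_a = a^{(s+t)/2}`. -/
def La (s t : ℝ) (p : ℝ × ℝ) : ℝ := p.1 ^ ((s + t) / 2)

/-- The discrete general curvelet transform
`W_f(a,θ,b) = (1/L_a) ∑_{ξ ∈ Ξ} e^{2πi b·ξ} g_{a,θ}(ξ) f̂(ξ)`, where the spatial sampling point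
indexed by `m ∈ (Fin L_B)²` is `b = (m₁/L_B, m₂/L_B)`. -/
def Wd (L LB : ℕ) (s t : ℝ) (g : ℝ × ℝ → ℤ × ℤ → ℝ) (p : ℝ × ℝ)
    (f : Fin L × Fin L → ℂ) (m : Fin LB × Fin LB) : ℂ :=
  ((La s t p : ℝ) : ℂ)⁻¹ * ∑ ξ ∈ Xi L,
    Complex.exp ((2 * ↑π * Complex.I) *
        ((((m.1 : ℕ) : ℂ) * (ξ.1 : ℂ) + ((m.2 : ℕ) : ℂ) * (ξ.2 : ℂ)) / (LB : ℂ))) *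
      ((g p ξ : ℝ) : ℂ) * dft L f ξ

open Complex ComplexConjugate

theorem sum_norm_sq_sum_mul_of_orthogonal {ι κ : Type*} [DecidableEq ι] (s : Finset ι)
    (t : Finset κ) (e : κ → ι → ℂ) (a : ι → ℂ) (C : ℝ)
    (horth : ∀ i ∈ s, ∀ i' ∈ s, a i ≠ 0 → a i' ≠ 0 →
      ∑ m ∈ t, e m i * conj (e m i') = if i = i' then (C : ℂ) else 0) :
    ∑ m ∈ t, ‖∑ i ∈ s, e m i * a i‖ ^ 2 = C * ∑ i ∈ s, ‖a i‖ ^ 2 := by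
  apply ofReal_injective
  push_cast
  simp_rw [← mul_conj']
  calc ∑ m ∈ t, (∑ i ∈ s, e m i * a i) * conj (∑ i ∈ s, e m i * a i)
      = ∑ i ∈ s, ∑ i' ∈ s, a i * conj (a i') * ∑ m ∈ t, e m i * conj (e m i') := by
        simp_rw [map_sum, sum_mul_sum, mul_sum]
        rw [sum_comm]
        refine sum_congr rfl fun i _ => ?_
        rw [sum_comm]
        exact sum_congr rfl fun i' _ => sum_congr rfl fun m _ => by rw [map_mul]; ring
    _ = ∑ i ∈ s, ∑ i' ∈ s, a i * conj (a i') * if i = i' then (C : ℂ) else 0 := by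
        refine sum_congr rfl fun i hi => sum_congr rfl fun i' hi' => ?_
        by_cases hai : a i = 0
        · simp [hai]
        by_cases hai' : a i' = 0
        · simp [hai']
        rw [horth i hi i' hi' hai hai']
    _ = C * ∑ i ∈ s, a i * conj (a i) := by
        simp [mul_sum, mul_comm]

section CharacterSums

variable {N : ℕ}

theorem injOn_intCast_zmod_Ico (c : ℤ) :
    Set.InjOn (fun j : ℤ => (j : ZMod N)) (Ico c (c + N)) := by
  intro a ha b hb hab
  simp only [coe_Ico, Set.mem_Ico] at ha hb
  have hdvd := (ZMod.intCast_eq_intCast_iff_dvd_sub a b N).1 hab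
  have := Int.eq_zero_of_abs_lt_dvd hdvd (abs_lt.2 ⟨by omega, by omega⟩)
  omega

variable [NeZero N]

theorem sum_Ico_intCast_zmod {M : Type*} [AddCommMonoid M] (c : ℤ) (F : ZMod N → M) :
    ∑ j ∈ Ico c (c + N), F j = ∑ x, F x := by
  classical
  rw [← sum_image (f := F) (injOn_intCast_zmod_Ico c), eq_univ_of_card (Finset.image _ _)]
  rw [card_image_of_injOn (injOn_intCast_zmod_Ico c), Int.card_Ico, ZMod.card]
  simp

theorem sum_Ico_exp (c k : ℤ) :
    ∑ j ∈ Ico c (c + N), exp (2 * π * I * ↑(k * j) / N) = if (N : ℤ) ∣ k then (N : ℂ) else 0 := by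
  simp_rw [← ZMod.stdAddChar_coe, Int.cast_mul, mul_comm (k : ZMod N)]
  rw [sum_Ico_intCast_zmod c (fun x => ZMod.stdAddChar (x * (k : ZMod N))),
    AddChar.sum_mulShift _ (ZMod.isPrimitive_stdAddChar N)]
  simp only [ZMod.intCast_zmod_eq_zero_iff_dvd, ZMod.card]
  split_ifs <;> simp

theorem sum_prod_exp_of_bijOn {α : Type*} (s : Finset α) (φ : α → ℤ) (c : ℤ)
    (hφ : Set.BijOn φ s (Ico c (c + N))) (k₁ k₂ : ℤ) :
    ∑ j ∈ s ×ˢ s, exp (2 * π * I * ↑(k₁ * φ j.1 + k₂ * φ j.2) / N) =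
      if (N : ℤ) ∣ k₁ ∧ (N : ℤ) ∣ k₂ then (N : ℂ) ^ 2 else 0 := by
  have hsplit : ∀ j : α × α, exp (2 * π * I * ↑(k₁ * φ j.1 + k₂ * φ j.2) / N) =
      exp (2 * π * I * ↑(k₁ * φ j.1) / N) * exp (2 * π * I * ↑(k₂ * φ j.2) / N) := by
    intro j
    rw [← exp_add]
    congr 1
    push_cast
    ring
  have hreindex (k : ℤ) : ∑ j ∈ s, exp (2 * π * I * ↑(k * φ j) / N) =
      ∑ j ∈ Ico c (c + N), exp (2 * π * I * ↑(k * j) / N) :=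
    sum_nbij φ hφ.mapsTo hφ.injOn hφ.surjOn fun _ _ => rfl
  simp_rw [hsplit, sum_product, ← mul_sum, ← sum_mul, hreindex, sum_Ico_exp]
  split_ifs <;> simp_all [sq]

end CharacterSums

def dftKernel (L : ℕ) (n : Fin L × Fin L) (ξ : ℤ × ℤ) : ℂ :=
  exp (-(2 * π * I) * ((((n.1 : ℕ) : ℂ) * (ξ.1 : ℂ) + ((n.2 : ℕ) : ℂ) * (ξ.2 : ℂ)) / (L : ℂ)))

def idftKernel (LB : ℕ) (m : Fin LB × Fin LB) (ξ : ℤ × ℤ) : ℂ :=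
  exp ((2 * π * I) * ((((m.1 : ℕ) : ℂ) * (ξ.1 : ℂ) + ((m.2 : ℕ) : ℂ) * (ξ.2 : ℂ)) / (LB : ℂ)))

theorem dft_eq_sum_dftKernel (L : ℕ) (f : Fin L × Fin L → ℂ) (ξ : ℤ × ℤ) :
    dft L f ξ = (L : ℂ)⁻¹ * ∑ n, dftKernel L n ξ * f n :=
  rfl

theorem Wd_eq_sum_idftKernel (L LB : ℕ) (s t : ℝ) (g : ℝ × ℝ → ℤ × ℤ → ℝ) (p : ℝ × ℝ)
    (f : Fin L × Fin L → ℂ) (m : Fin LB × Fin LB) :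
    Wd L LB s t g p f m =
      ((La s t p : ℝ) : ℂ)⁻¹ * ∑ ξ ∈ Xi L, idftKernel LB m ξ * ((g p ξ : ℂ) * dft L f ξ) := by
  simp only [Wd, idftKernel, mul_assoc]

theorem Xi_eq_Ico_prod (L : ℕ) :
    Xi L = Ico (-((L : ℤ) / 2)) (-((L : ℤ) / 2) + L) ×ˢ
      Ico (-((L : ℤ) / 2)) (-((L : ℤ) / 2) + L) := by
  ext ξ
  simp only [Xi, mem_filter, mem_product, mem_Ico]
  omega

theorem Fin.intCast_dvd_sub_iff {N : ℕ} (a b : Fin N) : (N : ℤ) ∣ (b : ℤ) - a ↔ a = b := by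
  refine ⟨fun h => ?_, fun h => by simp [h]⟩
  have := Int.eq_zero_of_abs_lt_dvd h (abs_lt.2 ⟨by omega, by omega⟩)
  omega

theorem dftKernel_mul_conj (L : ℕ) (n n' : Fin L × Fin L) (ξ : ℤ × ℤ) :
    dftKernel L n ξ * conj (dftKernel L n' ξ) =
      exp (2 * π * I * ↑(((n'.1 : ℤ) - n.1) * ξ.1 + ((n'.2 : ℤ) - n.2) * ξ.2) / L) := by
  rw [dftKernel, dftKernel, ← exp_conj, ← exp_add]
  congr 1
  simp only [map_mul, map_add, map_div₀, map_neg, conj_I, conj_natCast, map_intCast, conj_ofReal,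
    map_ofNat]
  push_cast
  ring

theorem sum_dftKernel_mul_conj (L : ℕ) (n n' : Fin L × Fin L) :
    ∑ ξ ∈ Xi L, dftKernel L n ξ * conj (dftKernel L n' ξ) = if n = n' then (L : ℂ) ^ 2 else 0 := by
  have : NeZero L := ⟨fun h => (h ▸ n.1).elim0⟩
  have hwindow := sum_prod_exp_of_bijOn (N := L) _ id (-((L : ℤ) / 2)) (Set.bijOn_id _)
    ((n'.1 : ℤ) - n.1) ((n'.2 : ℤ) - n.2)
  simp only [id] at hwindow
  simp_rw [dftKernel_mul_conj, Xi_eq_Ico_prod, hwindow, Fin.intCast_dvd_sub_iff, Prod.ext_iff]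

theorem idftKernel_mul_conj (LB : ℕ) (m : Fin LB × Fin LB) (ξ ξ' : ℤ × ℤ) :
    idftKernel LB m ξ * conj (idftKernel LB m ξ') =
      exp (2 * π * I * ↑((ξ.1 - ξ'.1) * ((m.1 : ℕ) : ℤ) + (ξ.2 - ξ'.2) * ((m.2 : ℕ) : ℤ)) /
        LB) := by
  rw [idftKernel, idftKernel, ← exp_conj, ← exp_add]
  congr 1
  simp only [map_mul, map_add, map_div₀, conj_I, conj_natCast, map_intCast, conj_ofReal,
    map_ofNat]
  push_cast
  ring

theorem sum_idftKernel_mul_conj (LB : ℕ) [NeZero LB] (ξ ξ' : ℤ × ℤ) :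
    ∑ m, idftKernel LB m ξ * conj (idftKernel LB m ξ') =
      if (LB : ℤ) ∣ ξ.1 - ξ'.1 ∧ (LB : ℤ) ∣ ξ.2 - ξ'.2 then (LB : ℂ) ^ 2 else 0 := by
  simp_rw [idftKernel_mul_conj, ← univ_product_univ]
  refine sum_prod_exp_of_bijOn _ (fun j : Fin LB => ((j : ℕ) : ℤ)) 0 ⟨fun j _ => by simp,
    fun a _ b _ h => by simpa [Fin.ext_iff] using h, fun z hz => ?_⟩ _ _
  simp only [zero_add, coe_Ico, Set.mem_Ico] at hz
  exact ⟨⟨z.toNat, by omega⟩, by simp, by simp; omega⟩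

theorem sum_norm_sq_dft (L : ℕ) (f : Fin L × Fin L → ℂ) :
    ∑ ξ ∈ Xi L, ‖dft L f ξ‖ ^ 2 = ∑ n, ‖f n‖ ^ 2 := by
  obtain rfl | hL := L.eq_zero_or_pos
  · simp [Xi]
  have hparseval := sum_norm_sq_sum_mul_of_orthogonal univ (Xi L) (fun ξ n => dftKernel L n ξ) f
    ((L : ℝ) ^ 2) (fun n _ n' _ _ _ => by push_cast; exact sum_dftKernel_mul_conj L n n')
  simp_rw [dft_eq_sum_dftKernel, norm_mul, mul_pow, ← mul_sum, hparseval, norm_inv,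
    norm_natCast]
  field_simp

theorem sum_norm_sq_Wd (L LB : ℕ) [NeZero LB] (s t : ℝ) (g : ℝ × ℝ → ℤ × ℤ → ℝ) (p : ℝ × ℝ)
    (hg : ∀ ξ ∈ Xi L, ∀ ξ' ∈ Xi L, ξ ≠ ξ' → g p ξ ≠ 0 → g p ξ' ≠ 0 →
      ¬(((LB : ℤ) ∣ ξ.1 - ξ'.1) ∧ ((LB : ℤ) ∣ ξ.2 - ξ'.2)))
    (f : Fin L × Fin L → ℂ) :
    ∑ m, ‖Wd L LB s t g p f m‖ ^ 2 =
      (LB / La s t p) ^ 2 * ∑ ξ ∈ Xi L, g p ξ ^ 2 * ‖dft L f ξ‖ ^ 2 := by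
  have hframe := sum_norm_sq_sum_mul_of_orthogonal (Xi L) univ (idftKernel LB)
    (fun ξ => (g p ξ : ℂ) * dft L f ξ) ((LB : ℝ) ^ 2) fun ξ hξ ξ' hξ' ha ha' => by
      rw [sum_idftKernel_mul_conj]
      by_cases h : ξ = ξ'
      · simp [h]
      · have hg0 : g p ξ ≠ 0 := fun h0 => ha (by simp [h0])
        have hg0' : g p ξ' ≠ 0 := fun h0 => ha' (by simp [h0])
        rw [if_neg (hg ξ hξ ξ' hξ' h hg0 hg0'), if_neg h]
  simp_rw [Wd_eq_sum_idftKernel, norm_mul, mul_pow, ← mul_sum, hframe, norm_mul, mul_pow, norm_inv,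
    inv_pow, norm_real, Real.norm_eq_abs, sq_abs]
  ring

theorem statement10_general (L LB : ℕ) (hLB : 0 < LB)
    (s t : ℝ)
    (P : Finset (ℝ × ℝ)) (hP : ∀ p ∈ P, 1 ≤ p.1)
    (g : ℝ × ℝ → ℤ × ℤ → ℝ)
    (hg1 : ∀ ξ ∈ Xi L, ∑ p ∈ P, (g p ξ) ^ 2 = 1)
    (hg2 : ∀ p ∈ P, ∀ ξ ∈ Xi L, ∀ ξ' ∈ Xi L, ξ ≠ ξ' → g p ξ ≠ 0 → g p ξ' ≠ 0 →
      ¬(((LB : ℤ) ∣ ξ.1 - ξ'.1) ∧ ((LB : ℤ) ∣ ξ.2 - ξ'.2)))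
    (f : Fin L × Fin L → ℂ) :
    ∑ p ∈ P, ∑ m : Fin LB × Fin LB, ‖Wd L LB s t g p f m‖ ^ 2 * (La s t p / (LB : ℝ)) ^ 2 =
      ∑ n : Fin L × Fin L, ‖f n‖ ^ 2 := by
  have : NeZero LB := ⟨hLB.ne'⟩
  calc ∑ p ∈ P, ∑ m, ‖Wd L LB s t g p f m‖ ^ 2 * (La s t p / LB) ^ 2
      = ∑ p ∈ P, ∑ ξ ∈ Xi L, g p ξ ^ 2 * ‖dft L f ξ‖ ^ 2 := by
        refine sum_congr rfl fun p hp => ?_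
        have hLa : La s t p ≠ 0 := (Real.rpow_pos_of_pos (by linarith [hP p hp]) _).ne'
        rw [← sum_mul, sum_norm_sq_Wd L LB s t g p (hg2 p hp) f]
        field_simp
    _ = ∑ ξ ∈ Xi L, (∑ p ∈ P, g p ξ ^ 2) * ‖dft L f ξ‖ ^ 2 := by
        rw [sum_comm]
        simp_rw [sum_mul]
    _ = ∑ n, ‖f n‖ ^ 2 := by
        rw [sum_congr rfl fun ξ hξ => by rw [hg1 ξ hξ, one_mul], sum_norm_sq_dft]

/-- Discrete tight frame property. With windows `g_{a,θ}` that are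
non-negative, satisfy `∑_{(a,θ) ∈ P} g_{a,θ}(ξ)² = 1` on `Ξ`, and whose supports contain no two
distinct frequencies congruent mod `L_B` in both coordinates,
`∑_{(a,θ) ∈ P} ∑_{b ∈ B} |W_f(a,θ,b)|² (L_a/L_B)² = ∑_{x ∈ X} |f(x)|²`. -/
theorem statement10 (L LB : ℕ) (hL : 0 < L) (hLB : 0 < LB)
    (s t : ℝ) (hs : 1 / 2 < s) (hst : s < t) (ht : t < 1)
    (P : Finset (ℝ × ℝ)) (hP : ∀ p ∈ P, 1 ≤ p.1)
    (g : ℝ × ℝ → ℤ × ℤ → ℝ)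
    (hg0 : ∀ p ∈ P, ∀ ξ ∈ Xi L, 0 ≤ g p ξ)
    (hg1 : ∀ ξ ∈ Xi L, ∑ p ∈ P, (g p ξ) ^ 2 = 1)
    (hg2 : ∀ p ∈ P, ∀ ξ ∈ Xi L, ∀ ξ' ∈ Xi L, ξ ≠ ξ' → g p ξ ≠ 0 → g p ξ' ≠ 0 →
      ¬(((LB : ℤ) ∣ ξ.1 - ξ'.1) ∧ ((LB : ℤ) ∣ ξ.2 - ξ'.2)))
    (f : Fin L × Fin L → ℂ) :
    ∑ p ∈ P, ∑ m : Fin LB × Fin LB, ‖Wd L LB s t g p f m‖ ^ 2 * (La s t p / (LB : ℝ)) ^ 2 =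
      ∑ n : Fin L × Fin L, ‖f n‖ ^ 2 :=
  statement10_general L LB hLB s t P hP g hg1 hg2 f
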